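/- Vertex-deletion rule for σ_z measurements on graph states: let G be a finite simple graph on V, a ∈ V, N(a) the neighborhood of a, and G−a the induced subgraph on V∖{a}. Then for every k ∈ Bool and every y : V∖{a} → Bool, |G⟩(y extended by the value k at a) = 2^{−1/2} · (−1)^{k · |{b ∈ N(a) : y b = true}|} · |G−a⟩(y). In other words, projecting qubit a of |G⟩ onto the computational basis state |k⟩ yields (after normalization) the state (∏_{b ∈ N(a)} σ_z^{(b)})^k |G−a⟩, i.e., a σ_z measurement deletes the measured vertex up to σ_z corrections on its neighbors. -/

import Mathlib

open scoped BigOperators Classical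

noncomputable section

/-- The number `q_G(x)` of edges `{a,b}` of `G` with `x a = x b = true`. -/
def qCount {V : Type} [Fintype V] [DecidableEq V] (G : SimpleGraph V)
    (x : V → Bool) : ℕ :=
  (Finset.univ.filter fun e : Sym2 V => e ∈ G.edgeSet ∧ ∀ v ∈ e, x v = true).card

/-- The graph state of a finite simple graph `G` on the vertex set `V`:
`|G⟩(x) = 2^{−n/2} · (−1)^{q_G(x)}` where `n = |V|`. -/
def graphState {V : Type} [Fintype V] [DecidableEq V] (G : SimpleGraph V) :
    (V → Bool) → ℂ :=
  fun x => (1 / (Real.sqrt (2 ^ Fintype.card V) : ℂ)) * (-1) ^ qCount G x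

/-- The Pauli operator `σ_z` at qubit `a`: `(σ_z^{(a)} ψ)(x) = (−1)^{x a} ψ(x)`. -/
def sigmaZ {V : Type} (a : V) (ψ : (V → Bool) → ℂ) : (V → Bool) → ℂ :=
  fun x => (if x a then (-1 : ℂ) else 1) * ψ x

/-- The Pauli operator `σ_x` at qubit `a`:
`(σ_x^{(a)} ψ)(x) = ψ(x with the coordinate at a flipped)`. -/
def sigmaX {V : Type} [DecidableEq V] (a : V) (ψ : (V → Bool) → ℂ) :
    (V → Bool) → ℂ :=
  fun x => ψ (Function.update x a (!x a))

/-- The product `∏_{b ∈ S} σ_z^{(b)}` of Pauli `σ_z` operators over a finite set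
of qubits. -/
def sigmaZprod {V : Type} (S : Finset V) (ψ : (V → Bool) → ℂ) :
    (V → Bool) → ℂ :=
  fun x => (∏ b ∈ S, if x b then (-1 : ℂ) else 1) * ψ x

/-- The correlation operator `K_a := σ_x^{(a)} ∘ ∏_{b ∈ N(a)} σ_z^{(b)}` of the
graph `G` at the vertex `a`, where `N(a)` is the neighborhood of `a` in `G`. -/
def corrOp {V : Type} [Fintype V] [DecidableEq V] (G : SimpleGraph V) (a : V)
    (ψ : (V → Bool) → ℂ) : (V → Bool) → ℂ :=
  sigmaX a (sigmaZprod (Finset.univ.filter fun b => G.Adj a b) ψ)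

/-- Extension of an assignment `y : V∖{a} → Bool` by the value `k` at `a`. -/
def extendAt {V : Type} [DecidableEq V] (a : V) (k : Bool)
    (y : {v : V // v ≠ a} → Bool) : V → Bool :=
  fun v => if h : v = a then k else y ⟨v, h⟩

/-! Split the edges counted by `q_G(x)` according to whether they contain `a`. Those avoiding
`a` are exactly the edges of `G − a` counted by `q_{G−a}` at the restriction of `x`. Those
through `a` count only when `x a = true`, and then correspond to the neighbours `b` of `a` with
`x b = true`. Together with `2^{n/2} = √2 · 2^{(n−1)/2}` this is the vertex-deletion rule. -/

@[simp]
theorem extendAt_self {V : Type} [DecidableEq V] (a : V) (k : Bool)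
    (y : {v : V // v ≠ a} → Bool) : extendAt a k y a = k := by
  simp [extendAt]

@[simp]
theorem extendAt_val {V : Type} [DecidableEq V] (a : V) (k : Bool)
    (y : {v : V // v ≠ a} → Bool) (v : {v : V // v ≠ a}) : extendAt a k y v = y v := by
  simp [extendAt, v.2]

section

variable {V : Type} [Fintype V] [DecidableEq V]

theorem card_subtype_ne_add_one (a : V) :
    Fintype.card {v : V // v ≠ a} + 1 = Fintype.card V := by
  rw [← Fintype.card_option, Fintype.card_congr (Equiv.optionSubtypeNe a)]

def markedEdges (G : SimpleGraph V) (x : V → Bool) : Finset (Sym2 V) :=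
  Finset.univ.filter fun e => e ∈ G.edgeSet ∧ ∀ v ∈ e, x v = true

theorem qCount_eq_card_markedEdges (G : SimpleGraph V) (x : V → Bool) :
    qCount G x = (markedEdges G x).card :=
  rfl

@[simp]
theorem mk_mem_markedEdges {G : SimpleGraph V} {x : V → Bool} {u v : V} :
    s(u, v) ∈ markedEdges G x ↔ G.Adj u v ∧ x u = true ∧ x v = true := by
  simp [markedEdges]

theorem card_markedEdges_filter_not_mem (G : SimpleGraph V) (x : V → Bool) (a : V) :
    ((markedEdges G x).filter (a ∉ ·)).card
      = qCount (G.comap (Subtype.val : {v : V // v ≠ a} → V)) (fun v => x v) := by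
  rw [qCount_eq_card_markedEdges]
  symm
  apply Finset.card_nbij (Sym2.map Subtype.val)
  · intro e he
    induction e with
    | _ u v => simpa [Ne.symm u.2, Ne.symm v.2] using he
  · exact (Sym2.map.injective Subtype.val_injective).injOn
  · intro e he
    induction e with
    | _ u v =>
      simp only [Finset.mem_coe, Finset.mem_filter, mk_mem_markedEdges, Sym2.mem_iff, not_or] at he
      obtain ⟨huv, hu, hv⟩ := he
      exact ⟨s(⟨u, Ne.symm hu⟩, ⟨v, Ne.symm hv⟩), by simpa using huv, rfl⟩

theorem card_markedEdges_filter_mem (G : SimpleGraph V) (x : V → Bool) (a : V) :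
    ((markedEdges G x).filter (a ∈ ·)).card
      = if x a then (Finset.univ.filter
          fun b : {v : V // v ≠ a} => G.Adj a b.val ∧ x b = true).card else 0 := by
  cases hxa : x a with
  | false =>
    rw [if_neg Bool.false_ne_true, Finset.card_eq_zero, Finset.filter_eq_empty_iff]
    intro e he hae
    simpa [hxa] using (Finset.mem_filter.mp he).2.2 a hae
  | true =>
    rw [if_pos rfl]
    symm
    apply Finset.card_nbij (fun b => s(a, b.val))
    · intro b hb
      simp_all
    · intro b₁ _ b₂ _ h
      exact Subtype.ext (Sym2.congr_right.mp h)
    · intro e he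
      obtain ⟨he, hae⟩ := Finset.mem_filter.mp he
      obtain ⟨b, rfl⟩ := Sym2.mem_iff_exists.mp hae
      rw [mk_mem_markedEdges] at he
      exact ⟨⟨b, (G.ne_of_adj he.1).symm⟩, by simpa using ⟨he.1, he.2.2⟩, rfl⟩

theorem qCount_eq_add_qCount_comap (G : SimpleGraph V) (x : V → Bool) (a : V) :
    qCount G x
      = (if x a then (Finset.univ.filter
          fun b : {v : V // v ≠ a} => G.Adj a b.val ∧ x b = true).card else 0)
        + qCount (G.comap (Subtype.val : {v : V // v ≠ a} → V)) (fun v => x v) := by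
  rw [← card_markedEdges_filter_mem, ← card_markedEdges_filter_not_mem,
    Finset.card_filter_add_card_filter_not, qCount_eq_card_markedEdges]

end

/-- Vertex-deletion rule for `σ_z` measurements on graph states: for every
`k : Bool` and every `y : V∖{a} → Bool`,
`|G⟩(y extended by k at a) = 2^{−1/2} · (−1)^{k·|{b ∈ N(a) : y b = true}|} · |G−a⟩(y)`,
where `G−a` is the induced subgraph on `V∖{a}`.  Thus projecting qubit `a` onto
`|k⟩` yields (after normalization) `(∏_{b ∈ N(a)} σ_z^{(b)})^k |G−a⟩`: a `σ_z`
measurement deletes the measured vertex up to `σ_z` corrections on its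
neighbors. -/
theorem graphState_sigmaZ_measurement {V : Type} [Fintype V] [DecidableEq V]
    (G : SimpleGraph V) (a : V) (k : Bool) (y : {v : V // v ≠ a} → Bool) :
    graphState G (extendAt a k y)
      = (1 / (Real.sqrt 2 : ℂ))
        * (-1) ^ (if k
            then (Finset.univ.filter
              fun b : {v : V // v ≠ a} => G.Adj a b.val ∧ y b = true).card
            else 0)
        * graphState (G.comap (Subtype.val : {v : V // v ≠ a} → V)) y := by
  rw [graphState, graphState, qCount_eq_add_qCount_comap G _ a]
  simp only [extendAt_self, extendAt_val]
  rw [← card_subtype_ne_add_one a, pow_succ, Real.sqrt_mul (pow_nonneg zero_le_two _), pow_add]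
  push_cast
  ring
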